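/- arXiv:2203.11599 — 9 statements merged into one kernel-verified Lean document; each statement's English description precedes it below -/
import Mathlib

section
/- Let ω : 𝔻 → ℂ be analytic with ω(0) = 0 and |ω(z)| ≤ |z| on 𝔻. Then for |z| = r < 1, |z ω'(z) − ω(z)| ≤ (r² − |ω(z)|²)/(1 − r²). -/
/-! If `ω 0 = 0` and `‖ω z‖ ≤ ‖z‖`, the quotient `φ = dslope ω 0`, i.e. `φ z = ω z / z`, maps the
unit disk into the closed unit disk. Since `φ' z = (z ω' z - ω z) / z ^ 2`, the inequality is the
Schwarz–Pick estimate `‖φ' z‖ (1 - ‖z‖²) ≤ 1 - ‖φ z‖²` multiplied by `‖z‖²`. Schwarz–Pick for maps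
into the open disk is the Schwarz lemma at `0` for `σ_{φ z} ∘ φ ∘ σ_{-z}`, where
`σ_a w = (w - a) / (1 - conj a * w)` is a disk automorphism with `σ_{-z} 0 = z` and `σ_a a = 0`;
maps into the closed disk are handled by applying it to `t φ` and letting `t → 1⁻`. -/

open Metric Set Filter Topology Complex ComplexConjugate

noncomputable def mobius (a w : ℂ) : ℂ := (w - a) / (1 - conj a * w)

section Mobius

variable {a w : ℂ}

lemma one_sub_conj_mul_ne_zero (ha : ‖a‖ < 1) (hw : ‖w‖ < 1) : 1 - conj a * w ≠ 0 := by
  have : ‖conj a * w‖ < 1 := by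
    rw [norm_mul, RCLike.norm_conj]
    exact mul_lt_one_of_nonneg_of_lt_one_left (norm_nonneg a) ha hw.le
  exact sub_ne_zero.2 fun h => by simp [← h] at this

lemma normSq_one_sub_conj_mul_sub_normSq_sub (a w : ℂ) :
    normSq (1 - conj a * w) - normSq (w - a) = (1 - normSq a) * (1 - normSq w) := by
  simp only [normSq_apply, sub_re, sub_im, one_re, one_im, mul_re, mul_im, conj_re, conj_im]
  ring

lemma norm_mobius_lt_one (ha : ‖a‖ < 1) (hw : ‖w‖ < 1) : ‖mobius a w‖ < 1 := by
  rw [mobius, norm_div, div_lt_one (norm_pos_iff.2 (one_sub_conj_mul_ne_zero ha hw)),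
    ← sq_lt_sq₀ (norm_nonneg _) (norm_nonneg _), Complex.sq_norm, Complex.sq_norm]
  have hpos : 0 < (1 - normSq a) * (1 - normSq w) := by
    rw [← Complex.sq_norm, ← Complex.sq_norm]
    exact mul_pos (by nlinarith [norm_nonneg a]) (by nlinarith [norm_nonneg w])
  linarith [normSq_one_sub_conj_mul_sub_normSq_sub a w]

lemma mapsTo_mobius (ha : ‖a‖ < 1) : MapsTo (mobius a) (ball 0 1) (ball 0 1) := fun w hw => by
  rw [mem_ball_zero_iff] at hw ⊢
  exact norm_mobius_lt_one ha hw

lemma mobius_self (a : ℂ) : mobius a a = 0 := by simp [mobius]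

lemma mobius_neg_zero (a : ℂ) : mobius (-a) 0 = a := by simp [mobius]

lemma hasDerivAt_mobius (h : 1 - conj a * w ≠ 0) :
    HasDerivAt (mobius a) ((1 - conj a * a) / (1 - conj a * w) ^ 2) w := by
  have hden : HasDerivAt (fun w => 1 - conj a * w) (-conj a) w := by
    simpa using ((hasDerivAt_id w).const_mul (conj a)).const_sub 1
  exact (((hasDerivAt_id' w).sub_const a).fun_div hden h).congr_deriv (by ring)

lemma differentiableOn_mobius (ha : ‖a‖ < 1) : DifferentiableOn ℂ (mobius a) (ball 0 1) :=
  fun _ hw => (hasDerivAt_mobius (one_sub_conj_mul_ne_zero ha (mem_ball_zero_iff.1 hw)))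
    |>.differentiableAt.differentiableWithinAt

lemma hasDerivAt_mobius_self (ha : ‖a‖ < 1) :
    HasDerivAt (mobius a) ((1 - ‖a‖ ^ 2 : ℝ) : ℂ)⁻¹ a := by
  have h := one_sub_conj_mul_ne_zero ha ha
  convert hasDerivAt_mobius h using 1
  rw [conj_mul'] at h ⊢
  rw [sq (1 - _), div_mul_cancel_left₀ h]
  push_cast; rfl

lemma hasDerivAt_mobius_neg_zero (a : ℂ) : HasDerivAt (mobius (-a)) ((1 - ‖a‖ ^ 2 : ℝ) : ℂ) 0 := by
  convert hasDerivAt_mobius (a := -a) (w := 0) (by simp) using 1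
  simp [conj_mul']

end Mobius

theorem norm_deriv_mul_le_of_mapsTo_ball {f : ℂ → ℂ} {z : ℂ}
    (hd : DifferentiableOn ℂ f (ball 0 1)) (hf : MapsTo f (ball 0 1) (ball 0 1))
    (hz : z ∈ ball 0 1) : ‖deriv f z‖ * (1 - ‖z‖ ^ 2) ≤ 1 - ‖f z‖ ^ 2 := by
  have hz' : ‖z‖ < 1 := mem_ball_zero_iff.1 hz
  have hfz : ‖f z‖ < 1 := mem_ball_zero_iff.1 (hf hz)
  have hmz : ‖-z‖ < 1 := by rwa [norm_neg]
  set F := mobius (f z) ∘ f ∘ mobius (-z)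
  have hF0 : F 0 = 0 := by simp [F, mobius_neg_zero, mobius_self]
  have hFd : DifferentiableOn ℂ F (ball 0 1) :=
    (differentiableOn_mobius hfz).comp (hd.comp (differentiableOn_mobius hmz)
      (mapsTo_mobius hmz)) (hf.comp (mapsTo_mobius hmz))
  have hFmaps : MapsTo F (ball 0 1) (closedBall (F 0) 1) := by
    rw [hF0]
    exact ((mapsTo_mobius hfz).comp (hf.comp (mapsTo_mobius hmz))).mono_right
      ball_subset_closedBall
  have hF' : HasDerivAt F
      (((1 - ‖f z‖ ^ 2 : ℝ) : ℂ)⁻¹ * (deriv f z * ((1 - ‖z‖ ^ 2 : ℝ) : ℂ))) 0 := by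
    have hfd : HasDerivAt f (deriv f z) (mobius (-z) 0) := by
      rw [mobius_neg_zero]
      exact (hd.differentiableAt (isOpen_ball.mem_nhds hz)).hasDerivAt
    have hσ : HasDerivAt (mobius (f z)) ((1 - ‖f z‖ ^ 2 : ℝ) : ℂ)⁻¹ (f (mobius (-z) 0)) := by
      rw [mobius_neg_zero]
      exact hasDerivAt_mobius_self hfz
    exact hσ.comp 0 (hfd.comp 0 (hasDerivAt_mobius_neg_zero z))
  have hSchwarz := Complex.norm_deriv_le_one_of_mapsTo_ball hFd hFmaps one_pos
  have hz2 : 0 < 1 - ‖z‖ ^ 2 := by nlinarith [norm_nonneg z]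
  have hfz2 : 0 < 1 - ‖f z‖ ^ 2 := by nlinarith [norm_nonneg (f z)]
  rwa [hF'.deriv, norm_mul, norm_mul, norm_inv, Complex.norm_of_nonneg hz2.le,
    Complex.norm_of_nonneg hfz2.le, inv_mul_le_iff₀ hfz2, mul_one] at hSchwarz

theorem norm_deriv_mul_le_of_mapsTo_closedBall {f : ℂ → ℂ} {z : ℂ}
    (hd : DifferentiableOn ℂ f (ball 0 1)) (hf : MapsTo f (ball 0 1) (closedBall 0 1))
    (hz : z ∈ ball 0 1) : ‖deriv f z‖ * (1 - ‖z‖ ^ 2) ≤ 1 - ‖f z‖ ^ 2 := by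
  set A := ‖deriv f z‖ * (1 - ‖z‖ ^ 2)
  set B := ‖f z‖ ^ 2
  have hscaled : ∀ t ∈ Ioo (0 : ℝ) 1, t * A + t ^ 2 * B ≤ 1 := by
    rintro t ⟨ht0, ht1⟩
    have htf : MapsTo (fun w => (t : ℂ) * f w) (ball 0 1) (ball 0 1) := fun w hw => by
      rw [mem_ball_zero_iff, norm_mul, Complex.norm_of_nonneg ht0.le]
      exact mul_lt_one_of_nonneg_of_lt_one_left ht0.le ht1 (mem_closedBall_zero_iff.1 (hf hw))
    have h := norm_deriv_mul_le_of_mapsTo_ball (hd.const_mul (t : ℂ)) htf hz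
    rw [deriv_const_mul _ (hd.differentiableAt (isOpen_ball.mem_nhds hz)), norm_mul, norm_mul,
      Complex.norm_of_nonneg ht0.le] at h
    linarith
  have hlim : Tendsto (fun t : ℝ => t * A + t ^ 2 * B) (𝓝[<] 1) (𝓝 (A + B)) := by
    have hc : Continuous fun t : ℝ => t * A + t ^ 2 * B := by fun_prop
    simpa using (hc.tendsto 1).mono_left nhdsWithin_le_nhds
  have := le_of_tendsto hlim (eventually_of_mem (Ioo_mem_nhdsLT one_pos) hscaled)
  linarith

theorem hasDerivAt_dslope_of_ne {𝕜 : Type*} [NontriviallyNormedField 𝕜] {f : 𝕜 → 𝕜} {f' c z : 𝕜}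
    (hf : HasDerivAt f f' z) (hz : z ≠ c) :
    HasDerivAt (dslope f c) (((z - c) * f' - (f z - f c)) / (z - c) ^ 2) z := by
  have h := (hf.sub_const (f c)).fun_div ((hasDerivAt_id' z).sub_const c) (sub_ne_zero.2 hz)
  refine (h.congr_deriv (by ring)).congr_of_eventuallyEq ?_
  filter_upwards [dslope_eventuallyEq_slope_of_ne f hz] with w hw
  rw [hw, slope_def_field]

/-- Dieudonné's inequality |zω'(z) − ω(z)| ≤ (r² − |ω(z)|²)/(1 − r²) for a Schwarz function. -/
theorem dieudonne_ineq (ω : ℂ → ℂ)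
    (hd : DifferentiableOn ℂ ω (ball (0:ℂ) 1))
    (h0 : ω 0 = 0)
    (hb : ∀ z ∈ ball (0:ℂ) 1, ‖ω z‖ ≤ ‖z‖) :
    ∀ z ∈ ball (0:ℂ) 1,
      ‖z * deriv ω z - ω z‖ ≤ (‖z‖ ^ 2 - ‖ω z‖ ^ 2) / (1 - ‖z‖ ^ 2) := by
  intro z hz
  rcases eq_or_ne z 0 with rfl | hz0
  · simp [h0]
  have hωmaps : MapsTo ω (ball 0 1) (closedBall (ω 0) 1) := fun w hw => by
    rw [h0, mem_closedBall_zero_iff]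
    exact (hb w hw).trans (mem_ball_zero_iff.1 hw).le
  have hdslope : MapsTo (dslope ω 0) (ball 0 1) (closedBall 0 1) := fun w hw => by
    simpa using Complex.norm_dslope_le_div_of_mapsTo_ball hd hωmaps hw
  have hpick := norm_deriv_mul_le_of_mapsTo_closedBall
    ((Complex.differentiableOn_dslope (ball_mem_nhds 0 one_pos)).2 hd) hdslope hz
  rw [(hasDerivAt_dslope_of_ne (hd.differentiableAt (isOpen_ball.mem_nhds hz)).hasDerivAt
    hz0).deriv, dslope_of_ne _ hz0, slope_def_field, h0] at hpick
  simp only [sub_zero, norm_div, norm_pow] at hpick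
  have hr : 0 < ‖z‖ := norm_pos_iff.2 hz0
  have hz2 : 0 < 1 - ‖z‖ ^ 2 := by nlinarith [mem_ball_zero_iff.1 hz]
  rw [le_div_iff₀ hz2]
  field_simp at hpick
  linarith
end

section
/- Let 0 ≤ α < 1, λ > 0, and n ≥ 1 an integer. Define φ(r) = (1+n)(2αn − λ(n+1) − n) r² + n(1−α+n)(2λ(n+1) + n + αn²) r − λn²(n+1−α)². Then φ has a smallest positive root δ, and δ satisfies δ ≤ n(n+1−α)/(n+1), so that 1 − δ(n+1)/(n(n+1−α)) ≥ 0; moreover this last quantity is strictly positive (the inequality δ < n(n+1−α)/(n+1) is strict). -/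
/-- Minimality of a positive root of a quadratic, abstractly. -/
lemma quad_min_aux (A b c r d : ℝ) (hc : 0 < c) (hdpos : 0 < d) (hr : 0 < r)
    (hφd : A * d ^ 2 + b * d - c = 0) (hφr : A * r ^ 2 + b * r - c = 0)
    (hbd : b * d ≤ 2 * c) : d ≤ r := by
  by_contra hlt
  push_neg at hlt
  have hfac : (r - d) * (A * (r + d) + b) = 0 := by linear_combination hφr - hφd
  have h2 : A * (r + d) + b = 0 := by
    rcases mul_eq_zero.mp hfac with h | h
    · exact absurd (by linarith : r = d) (ne_of_gt hlt).symm
    · exact h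
  have h3 : A * r * d = -c := by linear_combination r * h2 - hφr
  have hAneg : A < 0 := by
    by_contra h
    push_neg at h
    nlinarith [mul_nonneg (mul_nonneg h hr.le) hdpos.le]
  nlinarith [hφd, h3, hbd, mul_pos (mul_pos (neg_pos.mpr hAneg) hdpos) (sub_pos.mpr hlt)]

lemma div_trick_aux (x y B s : ℝ) (hs : 0 ≤ s) (hy : 0 ≤ y) (hden : 0 < B + s)
    (h : x * (B + s) = y * B) : x ≤ y := by
  nlinarith [mul_nonneg hy hs]

lemma smallest_root_delta_aux (α lam N s : ℝ) (hα0 : 0 ≤ α) (hα1 : α < 1)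
    (hlam : 0 < lam) (hN : 1 ≤ N) (hs0 : 0 ≤ s)
    (hs2 : s ^ 2 = (N + α * N ^ 2 + 2 * lam * (N + 1)) ^ 2 +
      4 * lam * ((1 + N) * (2 * α * N - lam * (N + 1) - N))) :
    0 < 2 * lam * N * (N + 1 - α) / (N + α * N ^ 2 + 2 * lam * (N + 1) + s) ∧
    ((1 + N) * (2 * α * N - lam * (N + 1) - N) *
        (2 * lam * N * (N + 1 - α) / (N + α * N ^ 2 + 2 * lam * (N + 1) + s)) ^ 2 +
      N * (1 - α + N) * (2 * lam * (N + 1) + N + α * N ^ 2) *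
        (2 * lam * N * (N + 1 - α) / (N + α * N ^ 2 + 2 * lam * (N + 1) + s)) -
      lam * N ^ 2 * (N + 1 - α) ^ 2 = 0) ∧
    (∀ r : ℝ, 0 < r →
      (1 + N) * (2 * α * N - lam * (N + 1) - N) * r ^ 2 +
        N * (1 - α + N) * (2 * lam * (N + 1) + N + α * N ^ 2) * r -
        lam * N ^ 2 * (N + 1 - α) ^ 2 = 0 →
      2 * lam * N * (N + 1 - α) / (N + α * N ^ 2 + 2 * lam * (N + 1) + s) ≤ r) ∧
    2 * lam * N * (N + 1 - α) / (N + α * N ^ 2 + 2 * lam * (N + 1) + s) <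
      N * (N + 1 - α) / (N + 1) ∧
    0 < 1 - (2 * lam * N * (N + 1 - α) / (N + α * N ^ 2 + 2 * lam * (N + 1) + s)) *
      (N + 1) / (N * (N + 1 - α)) := by
  have hNpos : (0:ℝ) < N := by linarith
  have hM : 0 < N + 1 - α := by linarith
  have hαN2 : 0 ≤ α * N ^ 2 := mul_nonneg hα0 (sq_nonneg N)
  have hBpos : 0 < N + α * N ^ 2 + 2 * lam * (N + 1) := by nlinarith
  have hden : 0 < N + α * N ^ 2 + 2 * lam * (N + 1) + s := by linarith
  set d : ℝ := 2 * lam * N * (N + 1 - α) / (N + α * N ^ 2 + 2 * lam * (N + 1) + s) with hd_def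
  have hd : d * (N + α * N ^ 2 + 2 * lam * (N + 1) + s) = 2 * lam * N * (N + 1 - α) := by
    rw [hd_def, div_mul_cancel₀ _ (ne_of_gt hden)]
  have hdpos : 0 < d := by rw [hd_def]; positivity
  have hφd : (1 + N) * (2 * α * N - lam * (N + 1) - N) * d ^ 2 +
      N * (1 - α + N) * (2 * lam * (N + 1) + N + α * N ^ 2) * d -
      lam * N ^ 2 * (N + 1 - α) ^ 2 = 0 := by
    have e1 : d ^ 2 * (N + α * N ^ 2 + 2 * lam * (N + 1) + s) ^ 2 =
        (2 * lam * N * (N + 1 - α)) ^ 2 := by rw [← mul_pow, hd]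
    have key : ((1 + N) * (2 * α * N - lam * (N + 1) - N) * d ^ 2 +
        N * (1 - α + N) * (2 * lam * (N + 1) + N + α * N ^ 2) * d -
        lam * N ^ 2 * (N + 1 - α) ^ 2) * (N + α * N ^ 2 + 2 * lam * (N + 1) + s) ^ 2 = 0 := by
      linear_combination ((1 + N) * (2 * α * N - lam * (N + 1) - N)) * e1 +
        (N * (1 - α + N) * (2 * lam * (N + 1) + N + α * N ^ 2) *
          (N + α * N ^ 2 + 2 * lam * (N + 1) + s)) * hd -
        (lam * N ^ 2 * (N + 1 - α) ^ 2) * hs2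
    exact (mul_eq_zero.mp key).resolve_right (by positivity)
  have hdlt : d < N * (N + 1 - α) / (N + 1) := by
    rw [hd_def, div_lt_div_iff₀ hden (by linarith : (0:ℝ) < N + 1)]
    have h1 : 2 * lam * (N + 1) < N + α * N ^ 2 + 2 * lam * (N + 1) + s := by linarith
    nlinarith [mul_lt_mul_of_pos_left h1 (mul_pos hNpos hM)]
  refine ⟨hdpos, hφd, ?_, hdlt, ?_⟩
  · intro r hr hφr
    have hbd : N * (1 - α + N) * (2 * lam * (N + 1) + N + α * N ^ 2) * d ≤
        2 * (lam * N ^ 2 * (N + 1 - α) ^ 2) := by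
      apply div_trick_aux _ _ (N + α * N ^ 2 + 2 * lam * (N + 1)) s hs0 (by positivity) hden
      linear_combination (N * (1 - α + N) * (2 * lam * (N + 1) + N + α * N ^ 2)) * hd
    exact quad_min_aux _ _ _ r d (by positivity) hdpos hr hφd hφr hbd
  · have hNM : 0 < N * (N + 1 - α) := mul_pos hNpos hM
    rw [sub_pos, div_lt_one hNM]
    calc d * (N + 1) < (N * (N + 1 - α) / (N + 1)) * (N + 1) :=
          mul_lt_mul_of_pos_right hdlt (by linarith)
      _ = N * (N + 1 - α) := by field_simp

/-- The quadratic φ(r) from Theorem 2.1 has a smallest positive root δ, and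
δ < n(n+1−α)/(n+1), so that 1 − δ(n+1)/(n(n+1−α)) > 0. -/
theorem smallest_root_delta (α lam : ℝ) (hα0 : 0 ≤ α) (hα1 : α < 1) (hlam : 0 < lam)
    (n : ℕ) (hn : 1 ≤ n) :
    let N : ℝ := (n : ℝ)
    let φ : ℝ → ℝ := fun r =>
      (1 + N) * (2 * α * N - lam * (N + 1) - N) * r ^ 2 +
        N * (1 - α + N) * (2 * lam * (N + 1) + N + α * N ^ 2) * r -
        lam * N ^ 2 * (N + 1 - α) ^ 2
    let δ : ℝ := 2 * lam * N * (N + 1 - α) /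
      (N + α * N ^ 2 + 2 * lam * (N + 1) +
        Real.sqrt (N ^ 2 + α ^ 2 * N ^ 4 + 2 * α * N ^ 3 + 8 * α * lam * N +
          12 * α * lam * N ^ 2 + 4 * α * lam * N ^ 3))
    0 < δ ∧ φ δ = 0 ∧ (∀ r : ℝ, 0 < r → φ r = 0 → δ ≤ r) ∧
      δ < N * (N + 1 - α) / (N + 1) ∧ 0 < 1 - δ * (N + 1) / (N * (N + 1 - α)) := by
  intro N φ δ
  have hN : (1:ℝ) ≤ N := by
    show (1:ℝ) ≤ (n:ℝ)
    exact_mod_cast hn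
  have hNpos : (0:ℝ) < N := by linarith
  have hDnn : (0:ℝ) ≤ N ^ 2 + α ^ 2 * N ^ 4 + 2 * α * N ^ 3 + 8 * α * lam * N +
      12 * α * lam * N ^ 2 + 4 * α * lam * N ^ 3 := by
    have h1 : 0 ≤ α * lam := mul_nonneg hα0 hlam.le
    nlinarith [sq_nonneg N, sq_nonneg (α * N ^ 2), mul_nonneg hα0 (pow_pos hNpos 3).le,
      mul_nonneg h1 hNpos.le, mul_nonneg h1 (sq_nonneg N), mul_nonneg h1 (pow_pos hNpos 3).le]
  have hs2 : (Real.sqrt (N ^ 2 + α ^ 2 * N ^ 4 + 2 * α * N ^ 3 + 8 * α * lam * N +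
      12 * α * lam * N ^ 2 + 4 * α * lam * N ^ 3)) ^ 2 =
      (N + α * N ^ 2 + 2 * lam * (N + 1)) ^ 2 +
      4 * lam * ((1 + N) * (2 * α * N - lam * (N + 1) - N)) := by
    rw [Real.sq_sqrt hDnn]; ring
  exact smallest_root_delta_aux α lam N _ hα0 hα1 hlam hN (Real.sqrt_nonneg _) hs2
end

section
/- The function g(r) = 2r(e^r − 1)·exp(∫₀ʳ (e^t − 1)/t dt) satisfies g(0.476) < 1 < g(0.477); in particular, the equation 2(e^r − 1)·r·exp(∫₀ʳ (e^t − 1)/t dt) = 1 has a root in the interval (0.476, 0.477). -/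
/-!
The integrand `(e^t - 1)/t` lies between its Taylor polynomials `∑_{k<n} t^k/(k+1)!` and, for
`0 < t ≤ 1`, the same polynomial plus the Lagrange-type remainder of `Real.exp_bound'`; integrating
gives polynomial bounds on `∫₀ʳ (e^t - 1)/t dt`. Combined with Taylor bounds for `exp` these give
`g 0.476 < 0.996` and `g 0.477 > 1.0009`. Off `t = 0` the integrand agrees with the continuous
function `dslope exp 0`, so its primitive, hence `g`, is continuous and the intermediate value
theorem produces the root.
-/

open Real Finset intervalIntegral MeasureTheory
open scoped Nat

lemma sum_pow_div_factorial_succ_mul (t : ℝ) (n : ℕ) :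
    ∑ k ∈ range n, t ^ k / (k + 1)! * t = ∑ k ∈ range n, t ^ (k + 1) / (k + 1)! :=
  sum_congr rfl fun k _ => by ring

lemma sum_le_exp_sub_one_div {t : ℝ} (ht : 0 < t) (n : ℕ) :
    ∑ k ∈ range n, t ^ k / (k + 1)! ≤ (exp t - 1) / t := by
  have h := sum_le_exp_of_nonneg ht.le (n + 1)
  rw [sum_range_succ'] at h
  rw [le_div_iff₀ ht, sum_mul, sum_pow_div_factorial_succ_mul]
  simp only [pow_zero, Nat.factorial_zero, Nat.cast_one, div_one] at h
  linarith

lemma exp_sub_one_div_le_sum {t : ℝ} (ht : 0 < t) (ht1 : t ≤ 1) (n : ℕ) :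
    (exp t - 1) / t ≤
      ∑ k ∈ range n, t ^ k / (k + 1)! + (n + 2) / ((n + 1)! * (n + 1)) * t ^ n := by
  have h := exp_bound' ht.le ht1 (n := n + 1) n.succ_pos
  rw [sum_range_succ'] at h
  rw [div_le_iff₀ ht, add_mul, sum_mul, sum_pow_div_factorial_succ_mul]
  simp only [pow_zero, Nat.factorial_zero, Nat.cast_one, div_one] at h
  have hrem : (n + 2) / ((n + 1)! * (n + 1)) * t ^ n * t
      = t ^ (n + 1) * ((n + 1 : ℕ) + 1) / ((n + 1)! * (n + 1 : ℕ)) := by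
    push_cast; ring
  linarith

lemma continuous_sum_pow_div_factorial (n : ℕ) :
    Continuous fun t : ℝ => ∑ k ∈ range n, t ^ k / (k + 1)! := by
  fun_prop

lemma integral_sum_pow_div_factorial (r : ℝ) (n : ℕ) :
    ∫ t in 0..r, ∑ k ∈ range n, t ^ k / (k + 1)! =
      ∑ k ∈ range n, r ^ (k + 1) / ((k + 1) * (k + 1)!) := by
  rw [integral_finsetSum fun k _ => ((continuous_pow k).div_const _).intervalIntegrable _ _]
  refine sum_congr rfl fun k _ => ?_
  rw [intervalIntegral.integral_div, integral_pow]
  field_simp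
  ring

-- At `t = 0` the integrand takes the junk value `0 / 0 = 0`, not the limit `1`.
lemma dslope_exp_zero {t : ℝ} (ht : t ≠ 0) : dslope exp 0 t = (exp t - 1) / t := by
  rw [dslope_of_ne _ ht, slope_def_field, exp_zero, sub_zero]

lemma continuous_dslope_exp_zero : Continuous (dslope exp 0) :=
  continuousOn_univ.mp <| (continuousOn_dslope Filter.univ_mem).mpr
    ⟨continuous_exp.continuousOn, differentiableAt_exp⟩

lemma intervalIntegrable_exp_sub_one_div (a b : ℝ) :
    IntervalIntegrable (fun t => (exp t - 1) / t) volume a b :=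
  (continuous_dslope_exp_zero.intervalIntegrable a b).congr_ae <|
    ae_restrict_of_ae <| (volume.ae_ne 0).mono fun _ ht => dslope_exp_zero ht

lemma continuous_integral_exp_sub_one_div :
    Continuous fun r => ∫ t in 0..r, (exp t - 1) / t :=
  continuous_primitive intervalIntegrable_exp_sub_one_div 0

lemma sum_le_integral_exp_sub_one_div {r : ℝ} (hr : 0 ≤ r) (n : ℕ) :
    ∑ k ∈ range n, r ^ (k + 1) / ((k + 1) * (k + 1)!) ≤ ∫ t in 0..r, (exp t - 1) / t := by
  rw [← integral_sum_pow_div_factorial]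
  exact integral_mono_on_of_le_Ioo hr
    ((continuous_sum_pow_div_factorial n).intervalIntegrable _ _)
    (intervalIntegrable_exp_sub_one_div 0 r)
    fun t ht => sum_le_exp_sub_one_div ht.1 n

lemma integral_exp_sub_one_div_le_sum {r : ℝ} (hr : 0 ≤ r) (hr1 : r ≤ 1) (n : ℕ) :
    ∫ t in 0..r, (exp t - 1) / t ≤
      ∑ k ∈ range n, r ^ (k + 1) / ((k + 1) * (k + 1)!) +
        (n + 2) / ((n + 1)! * (n + 1)) * (r ^ (n + 1) / (n + 1)) := by
  have hsum := (continuous_sum_pow_div_factorial n).intervalIntegrable (μ := volume) 0 r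
  have hpow := ((continuous_pow n).intervalIntegrable (μ := volume) 0 r).const_mul
    ((n + 2) / ((n + 1)! * (n + 1) : ℝ))
  calc ∫ t in 0..r, (exp t - 1) / t
      ≤ ∫ t in 0..r, (∑ k ∈ range n, t ^ k / (k + 1)! +
          (n + 2) / ((n + 1)! * (n + 1)) * t ^ n) :=
        integral_mono_on_of_le_Ioo hr (intervalIntegrable_exp_sub_one_div 0 r) (hsum.add hpow)
          fun t ht => exp_sub_one_div_le_sum ht.1 (ht.2.le.trans hr1) n
    _ = _ := by
        rw [integral_add hsum hpow, integral_sum_pow_div_factorial,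
          intervalIntegral.integral_const_mul, integral_pow]
        simp

noncomputable def omegaRadiusFn (r : ℝ) : ℝ :=
  2 * r * (exp r - 1) * exp (∫ t in 0..r, (exp t - 1) / t)

lemma continuous_omegaRadiusFn : Continuous omegaRadiusFn := by
  have hint := continuous_integral_exp_sub_one_div
  unfold omegaRadiusFn
  fun_prop

lemma omegaRadiusFn_lt_one : omegaRadiusFn 0.476 < 1 := by
  have hexp : exp 0.476 < 1.6097 :=
    (exp_bound' (by norm_num) (by norm_num) (n := 6) (by norm_num)).trans_lt
      (by norm_num [sum_range_succ, Nat.factorial])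
  have hint : ∫ t in 0..0.476, (exp t - 1) / t < 0.5394 :=
    (integral_exp_sub_one_div_le_sum (by norm_num) (by norm_num) 3).trans_lt
      (by norm_num [sum_range_succ, Nat.factorial])
  have hexp_int : exp (∫ t in 0..0.476, (exp t - 1) / t) < 1.7151 :=
    (exp_lt_exp.mpr hint).trans <|
      (exp_bound' (by norm_num) (by norm_num) (n := 6) (by norm_num)).trans_lt
        (by norm_num [sum_range_succ, Nat.factorial])
  have hexp_gt : 1 < exp 0.476 := one_lt_exp_iff.mpr (by norm_num)
  unfold omegaRadiusFn
  nlinarith [exp_pos (∫ t in 0..0.476, (exp t - 1) / t)]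

lemma one_lt_omegaRadiusFn : 1 < omegaRadiusFn 0.477 := by
  have hexp : 1.6112 < exp 0.477 :=
    lt_of_lt_of_le (by norm_num [sum_range_succ, Nat.factorial])
      (sum_le_exp_of_nonneg (by norm_num) 7)
  have hint : 0.5404 < ∫ t in 0..0.477, (exp t - 1) / t :=
    lt_of_lt_of_le (by norm_num [sum_range_succ, Nat.factorial])
      (sum_le_integral_exp_sub_one_div (by norm_num) 4)
  have hexp_int : 1.7166 < exp (∫ t in 0..0.477, (exp t - 1) / t) :=
    (lt_of_lt_of_le (by norm_num [sum_range_succ, Nat.factorial])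
      (sum_le_exp_of_nonneg (by norm_num) 7)).trans (exp_lt_exp.mpr hint)
  unfold omegaRadiusFn
  nlinarith

/-- The function g(r) = 2r(e^r − 1)exp(∫₀ʳ (e^t − 1)/t dt) satisfies g(0.476) < 1 < g(0.477),
so the equation g(r) = 1 has a root in (0.476, 0.477). -/
theorem root_location_Se :
    let g : ℝ → ℝ := fun r =>
      2 * r * (Real.exp r - 1) * Real.exp (∫ t in (0:ℝ)..r, (Real.exp t - 1) / t)
    g 0.476 < 1 ∧ 1 < g 0.477 ∧ ∃ r ∈ Set.Ioo (0.476 : ℝ) 0.477, g r = 1 := by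
  show omegaRadiusFn 0.476 < 1 ∧ 1 < omegaRadiusFn 0.477 ∧
    ∃ r ∈ Set.Ioo (0.476 : ℝ) 0.477, omegaRadiusFn r = 1
  exact ⟨omegaRadiusFn_lt_one, one_lt_omegaRadiusFn,
    intermediate_value_Ioo (by norm_num) continuous_omegaRadiusFn.continuousOn
      ⟨omegaRadiusFn_lt_one, one_lt_omegaRadiusFn⟩⟩
end

section
/- Define h(r) = 2r²·exp(e^r + r − 1) for r ∈ (0,1). Then h is strictly increasing on (0,1) and the equation h(r) = 1 has a unique root r₀ in (0,1), with r₀ ∈ (0.433, 0.434). -/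
open Finset in
private lemma exp_est {x : ℝ} (hx : |x| ≤ 1) :
    Real.exp x ≤ (∑ m ∈ range 10, x ^ m / m.factorial) + |x| ^ 10 * (11 / 36288000) ∧
    (∑ m ∈ range 10, x ^ m / m.factorial) - |x| ^ 10 * (11 / 36288000) ≤ Real.exp x := by
  have B := Real.exp_bound hx (n := 10) (by norm_num)
  rw [abs_sub_le_iff] at B
  norm_num [Nat.factorial] at B
  constructor <;> linarith [B.1, B.2]

private lemma e433_lt : Real.exp 0.433 < 1.541877 := by
  have h := (exp_est (x := 0.433) (by rw [abs_of_nonneg] <;> norm_num)).1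
  rw [abs_of_nonneg (by norm_num)] at h
  refine h.trans_lt ?_
  norm_num [Finset.sum_range_succ, Nat.factorial]

private lemma e434_gt : (1.543418 : ℝ) < Real.exp 0.434 := by
  have h := (exp_est (x := 0.434) (by rw [abs_of_nonneg] <;> norm_num)).2
  rw [abs_of_nonneg (by norm_num)] at h
  refine lt_of_lt_of_le ?_ h
  norm_num [Finset.sum_range_succ, Nat.factorial]

private lemma h433 : 2 * (0.433:ℝ) ^ 2 * Real.exp (Real.exp 0.433 + 0.433 - 1) < 1 := by
  have h1 : Real.exp 0.433 + 0.433 - 1 < 0.974877 := by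
    have := e433_lt; norm_num at this ⊢; linarith
  have h2 : Real.exp (Real.exp 0.433 + 0.433 - 1) < Real.exp 0.974877 :=
    Real.exp_lt_exp.2 h1
  have h3 := (exp_est (x := 0.974877) (by rw [abs_of_nonneg] <;> norm_num)).1
  rw [abs_of_nonneg (by norm_num)] at h3
  have h4 : Real.exp (0.974877 : ℝ) < 2.66 := by
    refine h3.trans_lt ?_
    norm_num [Finset.sum_range_succ, Nat.factorial]
  nlinarith [Real.exp_pos (Real.exp 0.433 + 0.433 - 1)]

private lemma h434 : 1 < 2 * (0.434:ℝ) ^ 2 * Real.exp (Real.exp 0.434 + 0.434 - 1) := by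
  have h1 : (0.977418 : ℝ) < Real.exp 0.434 + 0.434 - 1 := by
    have := e434_gt; norm_num at this ⊢; linarith
  have h2 : Real.exp (0.977418 : ℝ) < Real.exp (Real.exp 0.434 + 0.434 - 1) :=
    Real.exp_lt_exp.2 h1
  have h3 := (exp_est (x := 0.977418) (by rw [abs_of_nonneg] <;> norm_num)).2
  rw [abs_of_nonneg (by norm_num)] at h3
  have h4 : (2.6575 : ℝ) < Real.exp (0.977418 : ℝ) := by
    refine lt_of_lt_of_le ?_ h3
    norm_num [Finset.sum_range_succ, Nat.factorial]
  nlinarith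

/-- h(r) = 2r²exp(e^r + r − 1) is strictly increasing on (0,1) and h(r) = 1 has a unique
root r₀ in (0,1), with r₀ ∈ (0.433, 0.434). -/
theorem root_location_cardioid :
    let h : ℝ → ℝ := fun r => 2 * r ^ 2 * Real.exp (Real.exp r + r - 1)
    StrictMonoOn h (Set.Ioo (0:ℝ) 1) ∧
      ∃ r₀ ∈ Set.Ioo (0.433 : ℝ) 0.434,
        h r₀ = 1 ∧ ∀ r ∈ Set.Ioo (0:ℝ) 1, h r = 1 → r = r₀ := by
  intro h
  have hmono : StrictMonoOn h (Set.Ioo (0:ℝ) 1) := by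
    intro x hx y hy hxy
    have h1 : 2 * x ^ 2 < 2 * y ^ 2 := by nlinarith [hx.1, hy.1]
    have h2 : Real.exp (Real.exp x + x - 1) < Real.exp (Real.exp y + y - 1) := by
      have := Real.exp_lt_exp.2 hxy
      exact Real.exp_lt_exp.2 (by linarith)
    have hp : (0:ℝ) < 2 * x ^ 2 := by nlinarith [hx.1]
    exact mul_lt_mul'' h1 h2 (le_of_lt hp) (Real.exp_pos _).le
  refine ⟨hmono, ?_⟩
  have hcont : ContinuousOn h (Set.Icc (0.433:ℝ) 0.434) := by
    fun_prop
  have hIvt := intermediate_value_Ioo (a := (0.433:ℝ)) (b := 0.434) (by norm_num) hcont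
  have h1mem : (1:ℝ) ∈ Set.Ioo (h 0.433) (h 0.434) := ⟨h433, h434⟩
  obtain ⟨r₀, hr₀mem, hr₀⟩ := hIvt h1mem
  have hsub : r₀ ∈ Set.Ioo (0:ℝ) 1 :=
    ⟨by linarith [hr₀mem.1], by linarith [hr₀mem.2]⟩
  refine ⟨r₀, hr₀mem, hr₀, ?_⟩
  intro r hr hr1
  exact hmono.injOn hr hsub (by rw [hr1, hr₀])
end

section
/- Define h(r) = 2r·e^{r²/3 + 4r/3}·(2r²/3 + 4r/3) for r ∈ (0,1). Then h is strictly increasing, and the equation h(r) = 1 has a unique root r₀ ∈ (0.411, 0.412). -/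
open Real Finset

lemma exp_poly_lb {x : ℝ} (hx : 0 ≤ x) :
    1 + x + x^2/2 + x^3/6 + x^4/24 + x^5/120 + x^6/720 ≤ Real.exp x := by
  have h := Real.sum_le_exp_of_nonneg hx 7
  have : ∑ i ∈ Finset.range 7, x ^ i / i.factorial
      = 1 + x + x^2/2 + x^3/6 + x^4/24 + x^5/120 + x^6/720 := by
    simp [Finset.sum_range_succ, Nat.factorial]
  linarith [this ▸ h]

lemma exp_poly_ub {x : ℝ} (h1 : 0 ≤ x) (h2 : x ≤ 1) :
    Real.exp x ≤ 1 + x + x^2/2 + x^3/6 + x^4/24 + x^5/120 + x^6/720 + x^7 * 8 / (5040 * 7) := by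
  have h := Real.exp_bound' h1 h2 (n := 7) (by norm_num)
  have e : ∑ i ∈ Finset.range 7, x ^ i / i.factorial
      = 1 + x + x^2/2 + x^3/6 + x^4/24 + x^5/120 + x^6/720 := by
    simp [Finset.sum_range_succ, Nat.factorial]
  rw [e] at h
  convert h using 2
  norm_num [Nat.factorial]

/-- h(r) = 2r·e^{r²/3 + 4r/3}(2r²/3 + 4r/3) is strictly increasing on (0,1) and
h(r) = 1 has a unique root r₀ ∈ (0.411, 0.412). -/
theorem root_location_SC :
    let h : ℝ → ℝ := fun r =>
      2 * r * Real.exp (r ^ 2 / 3 + 4 * r / 3) * (2 * r ^ 2 / 3 + 4 * r / 3)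
    StrictMonoOn h (Set.Ioo (0:ℝ) 1) ∧
      ∃ r₀ ∈ Set.Ioo (0.411 : ℝ) 0.412,
        h r₀ = 1 ∧ ∀ r ∈ Set.Ioo (0:ℝ) 1, h r = 1 → r = r₀ := by
  intro h
  have hmono : StrictMonoOn h (Set.Ioo (0:ℝ) 1) := by
    intro x hx y hy hxy
    obtain ⟨hx0, hx1⟩ := hx
    obtain ⟨hy0, hy1⟩ := hy
    have hexp : Real.exp (x ^ 2 / 3 + 4 * x / 3) < Real.exp (y ^ 2 / 3 + 4 * y / 3) :=
      Real.exp_lt_exp.2 (by nlinarith)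
    have hp1 : (0:ℝ) < Real.exp (x ^ 2 / 3 + 4 * x / 3) := Real.exp_pos _
    simp only [h]
    have hA : 2 * x * (2 * x ^ 2 / 3 + 4 * x / 3) < 2 * y * (2 * y ^ 2 / 3 + 4 * y / 3) := by
      have h3 : x ^ 3 < y ^ 3 := pow_lt_pow_left₀ hxy hx0.le (by norm_num)
      have h2 : x ^ 2 < y ^ 2 := pow_lt_pow_left₀ hxy hx0.le (by norm_num)
      nlinarith
    have hApos : (0:ℝ) ≤ 2 * x * (2 * x ^ 2 / 3 + 4 * x / 3) := by positivity
    have key := mul_lt_mul'' hA hexp hApos hp1.le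
    nlinarith [key]
  refine ⟨hmono, ?_⟩
  -- numeric bounds
  have hcont : ContinuousOn h (Set.Icc (0.411:ℝ) 0.412) := by
    apply Continuous.continuousOn
    fun_prop
  have ha : h 0.411 < 1 := by
    simp only [h]
    have hx : (0:ℝ) ≤ (0.411:ℝ)^2/3 + 4*0.411/3 := by norm_num
    have hx1 : ((0.411:ℝ)^2/3 + 4*0.411/3) ≤ 1 := by norm_num
    have := exp_poly_ub hx hx1
    nlinarith
  have hb : (1:ℝ) < h 0.412 := by
    simp only [h]
    have hx : (0:ℝ) ≤ (0.412:ℝ)^2/3 + 4*0.412/3 := by norm_num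
    have := exp_poly_lb hx
    nlinarith
  have hsub : Set.Icc (0.411:ℝ) 0.412 ⊆ Set.Icc (0.411:ℝ) 0.412 := subset_rfl
  obtain ⟨r₀, hr₀mem, hr₀⟩ := intermediate_value_Icc (by norm_num : (0.411:ℝ) ≤ 0.412) hcont
    ⟨le_of_lt ha, le_of_lt hb⟩
  have hne1 : r₀ ≠ 0.411 := by rintro rfl; exact absurd hr₀ (ne_of_lt ha)
  have hne2 : r₀ ≠ 0.412 := by rintro rfl; exact absurd hr₀.symm (ne_of_lt hb)
  have hr₀Ioo : r₀ ∈ Set.Ioo (0.411:ℝ) 0.412 :=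
    ⟨lt_of_le_of_ne hr₀mem.1 (Ne.symm hne1), lt_of_le_of_ne hr₀mem.2 hne2⟩
  refine ⟨r₀, hr₀Ioo, hr₀, ?_⟩
  intro r hr hr1
  have hr₀Ioo01 : r₀ ∈ Set.Ioo (0:ℝ) 1 := ⟨by linarith [hr₀Ioo.1], by linarith [hr₀Ioo.2]⟩
  exact hmono.injOn hr hr₀Ioo01 (by rw [hr1, hr₀])
end

section
/- For all r ∈ [0,1) and all θ: |√(1 + re^{iθ}) − 1| ≤ 1 − √(1 − r), where √ denotes the principal branch of the square root. -/
/-!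
Write `w = √(1 + r e^{iθ})`. Then `(w - 1)(w + 1) = r e^{iθ}`, so `‖w - 1‖ ‖w + 1‖ = r`, while
`‖w + 1‖ ≥ 1 + Re w ≥ 1 + √(1 - r)` because `Re (1 + r e^{iθ}) ≥ 1 - r`. Hence
`‖w - 1‖ ≤ r / (1 + √(1 - r)) = 1 - √(1 - r)`.
-/

namespace Complex

theorem sqrt_re_le_cpow_inv_two_re (z : ℂ) : Real.sqrt z.re ≤ (z ^ (2⁻¹ : ℂ)).re := by
  rw [cpow_inv_two_re]
  exact Real.sqrt_le_sqrt (by linarith [re_le_norm z])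

theorem norm_sub_one_mul_one_add_re_le (w : ℂ) : ‖w - 1‖ * (1 + w.re) ≤ ‖w ^ 2 - 1‖ := by
  have hfactor : w ^ 2 - 1 = (w - 1) * (w + 1) := by ring
  rw [hfactor, norm_mul]
  gcongr
  simpa [add_comm] using re_le_norm (w + 1)

end Complex

open Complex in
/-- Maximum modulus estimate |√(1+re^{iθ}) − 1| ≤ 1 − √(1−r) for the principal branch. -/
theorem lemniscate_max_modulus (r θ : ℝ) (hr0 : 0 ≤ r) (hr1 : r < 1) :
    ‖(1 + (r : ℂ) * Complex.exp (θ * Complex.I)) ^ ((1 : ℂ) / 2) - 1‖ ≤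
      1 - Real.sqrt (1 - r) := by
  set z : ℂ := 1 + r * exp (θ * I)
  set w : ℂ := z ^ ((1 : ℂ) / 2)
  set s : ℝ := Real.sqrt (1 - r)
  have hw : w ^ 2 - 1 = r * exp (θ * I) := by
    have hw_sq : w ^ 2 = z := by
      simp [w, one_div]
    rw [hw_sq]
    ring
  have hz_re : 1 - r ≤ z.re := by
    simp only [z, add_re, one_re, re_ofReal_mul, exp_ofReal_mul_I_re]
    nlinarith [Real.neg_one_le_cos θ]
  have hw_re : s ≤ w.re := by
    simpa only [w, one_div] using
      (Real.sqrt_le_sqrt hz_re).trans (sqrt_re_le_cpow_inv_two_re z)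
  have hrs : r = (1 - s) * (1 + s) := by
    have := Real.sq_sqrt (sub_nonneg.mpr hr1.le)
    linear_combination this
  have hprod : ‖w - 1‖ * (1 + s) ≤ (1 - s) * (1 + s) :=
    calc ‖w - 1‖ * (1 + s) ≤ ‖w - 1‖ * (1 + w.re) := by gcongr
      _ ≤ ‖w ^ 2 - 1‖ := norm_sub_one_mul_one_add_re_le w
      _ = r := by rw [hw, norm_mul, norm_exp_ofReal_mul_I, mul_one, Complex.norm_of_nonneg hr0]
      _ = (1 - s) * (1 + s) := hrs
  exact le_of_mul_le_mul_right hprod (by positivity)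
end

section
/- The function g(r) = 8r(1 − √(1−r))·exp(2√(1+r) − 2) − (1 + √(1+r))² has a root r₀ in the interval (0.734, 0.735), and g(r) < 0 for 0 < r < r₀. -/
/-- Series upper bound for exp at the rational point 0.63364. -/
lemma exp_ub_SL : Real.exp 0.63364 ≤ 1.8846 := by
  have h := Real.exp_bound' (x := 0.63364) (by norm_num) (by norm_num) (n := 8) (by norm_num)
  refine h.trans ?_
  norm_num [Finset.sum_range_succ, Nat.factorial]

/-- Series lower bound for exp at the rational point 0.63438. -/
lemma exp_lb_SL : (1.8858 : ℝ) ≤ Real.exp 0.63438 := by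
  have h := Real.sum_le_exp_of_nonneg (x := 0.63438) (by norm_num) 8
  refine le_trans ?_ h
  norm_num [Finset.sum_range_succ, Nat.factorial]

/-- The ratio exp(2s-2)/(1+s)^2 is monotone for s ≥ 1. -/
lemma ratio_mono_SL {s t : ℝ} (hs : 1 ≤ s) (hst : s ≤ t) :
    Real.exp (2 * s - 2) * (1 + t) ^ 2 ≤ Real.exp (2 * t - 2) * (1 + s) ^ 2 := by
  have h1 : 1 + t ≤ (1 + s) * Real.exp (t - s) := by
    have h := Real.add_one_le_exp (t - s)
    nlinarith
  have h0 : (0 : ℝ) ≤ 1 + t := by linarith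
  have h2 : (1 + t) ^ 2 ≤ ((1 + s) * Real.exp (t - s)) ^ 2 := pow_le_pow_left₀ h0 h1 2
  have h3 : Real.exp (2 * s - 2) * ((1 + s) * Real.exp (t - s)) ^ 2
      = Real.exp (2 * t - 2) * (1 + s) ^ 2 := by
    rw [mul_pow, sq (Real.exp (t - s)), ← Real.exp_add, ← mul_assoc,
      mul_comm (Real.exp (2 * s - 2)), mul_assoc, ← Real.exp_add]
    ring_nf
  calc Real.exp (2 * s - 2) * (1 + t) ^ 2
      ≤ Real.exp (2 * s - 2) * ((1 + s) * Real.exp (t - s)) ^ 2 :=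
        mul_le_mul_of_nonneg_left h2 (Real.exp_pos _).le
    _ = Real.exp (2 * t - 2) * (1 + s) ^ 2 := h3

/-- The function g(r) = 8r(1 − √(1−r))exp(2√(1+r) − 2) − (1 + √(1+r))² has a root
r₀ ∈ (0.734, 0.735) and is negative on (0, r₀). -/
theorem root_location_SL :
    let g : ℝ → ℝ := fun r =>
      8 * r * (1 - Real.sqrt (1 - r)) * Real.exp (2 * Real.sqrt (1 + r) - 2) -
        (1 + Real.sqrt (1 + r)) ^ 2
    ∃ r₀ ∈ Set.Ioo (0.734 : ℝ) 0.735,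
      g r₀ = 0 ∧ ∀ r : ℝ, 0 < r → r < r₀ → g r < 0 := by
  intro g
  have hcont : Continuous g := by
    simp only [g]
    continuity
  -- g(0.734) < 0
  have hga : g 0.734 < 0 := by
    simp only [g]
    have hs1 : (0.51575 : ℝ) ≤ Real.sqrt (1 - 0.734) := by
      rw [show (1 : ℝ) - 0.734 = 0.266 by norm_num]
      rw [show (0.51575 : ℝ) = Real.sqrt (0.51575 ^ 2) by
        rw [Real.sqrt_sq (by norm_num)]]
      exact Real.sqrt_le_sqrt (by norm_num)
    have hs2 : Real.sqrt (1 + 0.734) ≤ 1.31682 := by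
      rw [show (1.31682 : ℝ) = Real.sqrt (1.31682 ^ 2) by
        rw [Real.sqrt_sq (by norm_num)]]
      exact Real.sqrt_le_sqrt (by norm_num)
    have hs3 : (1.31681 : ℝ) ≤ Real.sqrt (1 + 0.734) := by
      rw [show (1.31681 : ℝ) = Real.sqrt (1.31681 ^ 2) by
        rw [Real.sqrt_sq (by norm_num)]]
      exact Real.sqrt_le_sqrt (by norm_num)
    have he : Real.exp (2 * Real.sqrt (1 + 0.734) - 2) ≤ 1.8846 := by
      refine le_trans ?_ exp_ub_SL
      exact Real.exp_le_exp.mpr (by nlinarith)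
    have hepos : (0 : ℝ) < Real.exp (2 * Real.sqrt (1 + 0.734) - 2) := Real.exp_pos _
    nlinarith [Real.sqrt_nonneg (1 - (0.734 : ℝ))]
  -- g(0.735) > 0
  have hgb : 0 < g 0.735 := by
    simp only [g]
    have hs1 : Real.sqrt (1 - 0.735) ≤ 0.51479 := by
      rw [show (0.51479 : ℝ) = Real.sqrt (0.51479 ^ 2) by
        rw [Real.sqrt_sq (by norm_num)]]
      exact Real.sqrt_le_sqrt (by norm_num)
    have hs2 : (1.31719 : ℝ) ≤ Real.sqrt (1 + 0.735) := by
      rw [show (1.31719 : ℝ) = Real.sqrt (1.31719 ^ 2) by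
        rw [Real.sqrt_sq (by norm_num)]]
      exact Real.sqrt_le_sqrt (by norm_num)
    have hs3 : Real.sqrt (1 + 0.735) ≤ 1.3172 := by
      rw [show (1.3172 : ℝ) = Real.sqrt (1.3172 ^ 2) by
        rw [Real.sqrt_sq (by norm_num)]]
      exact Real.sqrt_le_sqrt (by norm_num)
    have he : (1.8858 : ℝ) ≤ Real.exp (2 * Real.sqrt (1 + 0.735) - 2) := by
      refine le_trans exp_lb_SL ?_
      exact Real.exp_le_exp.mpr (by nlinarith)
    nlinarith [Real.sqrt_nonneg (1 - (0.735 : ℝ))]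
  -- intermediate value theorem
  have hsub := intermediate_value_Ioo (a := (0.734 : ℝ)) (b := 0.735)
    (by norm_num) hcont.continuousOn
  obtain ⟨r₀, hr₀mem, hgr₀⟩ := hsub ⟨hga, hgb⟩
  refine ⟨r₀, hr₀mem, hgr₀, ?_⟩
  intro r hr0 hrr₀
  obtain ⟨hr₀1, hr₀2⟩ := hr₀mem
  have hr1 : r < 1 := by linarith
  simp only [g] at hgr₀ ⊢
  -- notation
  have hs1 : (1 : ℝ) ≤ Real.sqrt (1 + r) := Real.one_le_sqrt.mpr (by linarith)
  have hst : Real.sqrt (1 + r) ≤ Real.sqrt (1 + r₀) := Real.sqrt_le_sqrt (by linarith)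
  -- A strictly increasing
  have hsq1 : Real.sqrt (1 - r₀) < Real.sqrt (1 - r) :=
    Real.sqrt_lt_sqrt (by linarith) (by linarith)
  have hsq2 : Real.sqrt (1 - r) ≤ 1 := Real.sqrt_le_one.mpr (by linarith)
  have hA : 8 * r * (1 - Real.sqrt (1 - r)) < 8 * r₀ * (1 - Real.sqrt (1 - r₀)) := by
    nlinarith
  have hApos : 0 < 8 * r₀ * (1 - Real.sqrt (1 - r₀)) := by nlinarith
  have hEr : (0 : ℝ) < Real.exp (2 * Real.sqrt (1 + r) - 2) := Real.exp_pos _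
  have hBr₀ : (0 : ℝ) < (1 + Real.sqrt (1 + r₀)) ^ 2 := by positivity
  have hBr : (0 : ℝ) < (1 + Real.sqrt (1 + r)) ^ 2 := by positivity
  have hEB := ratio_mono_SL hs1 hst
  have heq : 8 * r₀ * (1 - Real.sqrt (1 - r₀)) * Real.exp (2 * Real.sqrt (1 + r₀) - 2)
      = (1 + Real.sqrt (1 + r₀)) ^ 2 := by linarith
  nlinarith [mul_lt_mul_of_pos_right (mul_lt_mul_of_pos_right hA hEr) hBr₀,
    mul_le_mul_of_nonneg_left hEB hApos.le]
end

section
/- Define g(r) = 2r(r + r³/3)·exp(r − r³/9) − 1. Then g has a root r₀ ∈ (0.524, 0.525), g is strictly increasing on (0,1), and g(r) < 0 for 0 < r < r₀. -/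
open Finset in
lemma exp_lower_aux (x : ℝ) (hx : 0 ≤ x) :
    (1 + x + x^2/2 + x^3/6 + x^4/24 + x^5/120 + x^6/720 + x^7/5040) ≤ Real.exp x := by
  have h := Real.sum_le_exp_of_nonneg hx 8
  have : ∑ i ∈ range 8, x ^ i / i.factorial
      = 1 + x + x^2/2 + x^3/6 + x^4/24 + x^5/120 + x^6/720 + x^7/5040 := by
    simp [Finset.sum_range_succ, Nat.factorial]
  linarith [this ▸ h]

open Finset in
lemma exp_upper_aux (x : ℝ) (hx0 : 0 ≤ x) (hx1 : x ≤ 1) :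
    Real.exp x ≤ 1 + x + x^2/2 + x^3/6 + x^4/24 + x^5/100 := by
  have h := Real.exp_bound' hx0 hx1 (n := 5) (by norm_num)
  have hs : ∑ m ∈ range 5, x ^ m / m.factorial
      = 1 + x + x^2/2 + x^3/6 + x^4/24 := by
    simp [Finset.sum_range_succ, Nat.factorial]
  rw [hs] at h
  norm_num [Nat.factorial] at h
  linarith

/-- g(r) = 2r(r + r³/3)exp(r − r³/9) − 1 has a root r₀ ∈ (0.524, 0.525), is strictly
increasing on (0,1), and is negative on (0, r₀). -/
theorem root_location_Ne :
    let g : ℝ → ℝ := fun r =>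
      2 * r * (r + r ^ 3 / 3) * Real.exp (r - r ^ 3 / 9) - 1
    StrictMonoOn g (Set.Ioo (0:ℝ) 1) ∧
      ∃ r₀ ∈ Set.Ioo (0.524 : ℝ) 0.525,
        g r₀ = 0 ∧ ∀ r : ℝ, 0 < r → r < r₀ → g r < 0 := by
  intro g
  have hmono : StrictMonoOn g (Set.Ioo (0:ℝ) 1) := by
    rintro a ⟨ha0, ha1⟩ b ⟨hb0, hb1⟩ hab
    have h2 : a ^ 2 < b ^ 2 := by nlinarith
    have h4 : a ^ 4 < b ^ 4 := by nlinarith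
    have hh : 2 * a * (a + a ^ 3 / 3) < 2 * b * (b + b ^ 3 / 3) := by ring_nf; nlinarith
    have hk : Real.exp (a - a ^ 3 / 9) < Real.exp (b - b ^ 3 / 9) :=
      Real.exp_lt_exp.2 (by nlinarith [mul_pos ha0 hb0, sq_nonneg (a+b), mul_pos (sub_pos.2 hab) (mul_pos ha0 hb0)])
    have hp1 : (0:ℝ) < Real.exp (a - a ^ 3 / 9) := Real.exp_pos _
    have hp2 : (0:ℝ) ≤ 2 * b * (b + b ^ 3 / 3) := by positivity
    have := mul_lt_mul hh hk.le hp1 hp2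
    simp only [g]
    linarith
  refine ⟨hmono, ?_⟩
  -- numeric bounds
  have hga : g 0.524 < 0 := by
    have hx0 : (0:ℝ) ≤ (0.524 : ℝ) - (0.524:ℝ) ^ 3 / 9 := by norm_num
    have hx1 : (0.524:ℝ) - (0.524:ℝ) ^ 3 / 9 ≤ 1 := by norm_num
    have h := exp_upper_aux _ hx0 hx1
    have hpos : (0:ℝ) < 2 * 0.524 * (0.524 + (0.524:ℝ) ^ 3 / 3) := by norm_num
    have := mul_le_mul_of_nonneg_left h hpos.le
    simp only [g]
    nlinarith [this]
  have hgb : 0 < g 0.525 := by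
    have hx0 : (0:ℝ) ≤ (0.525 : ℝ) - (0.525:ℝ) ^ 3 / 9 := by norm_num
    have h := exp_lower_aux _ hx0
    have hpos : (0:ℝ) < 2 * 0.525 * (0.525 + (0.525:ℝ) ^ 3 / 3) := by norm_num
    have := mul_le_mul_of_nonneg_left h hpos.le
    simp only [g]
    nlinarith [this]
  have hcont : ContinuousOn g (Set.Icc (0.524:ℝ) 0.525) := by
    apply Continuous.continuousOn
    fun_prop
  have hsub := intermediate_value_Ioo (by norm_num : (0.524:ℝ) ≤ 0.525) hcont
  have h0 : (0:ℝ) ∈ Set.Ioo (g 0.524) (g 0.525) := ⟨hga, hgb⟩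
  obtain ⟨r₀, hr₀mem, hr₀⟩ := hsub h0
  refine ⟨r₀, hr₀mem, hr₀, fun r hr0 hrr₀ => ?_⟩
  have hr₀1 : r₀ < 1 := lt_trans hr₀mem.2 (by norm_num)
  have := hmono ⟨hr0, lt_trans hrr₀ hr₀1⟩ ⟨lt_trans (by norm_num) hr₀mem.1, hr₀1⟩ hrr₀
  rw [hr₀] at this
  exact this
end

section
/- Let f ∈ Ω, i.e., f is analytic on 𝔻 with f(0)=0, f'(0)=1, and |zf'(z) − f(z)| < 1/2 on 𝔻. Then there exists an analytic function ω on 𝔻 with ω(0) = 0, |ω(z)| ≤ |z|, and |ω'(z)| ≤ 1 for all z ∈ 𝔻, such that f(z) = z + (1/2)z·ω(z). -/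
/-!
Put `ω z = 2 (f z - z) / z`, so that `f z = z + z ω(z) / 2` and `z f'(z) - f(z) = z² ω'(z) / 2`.
The hypothesis thus says `‖z² ω'(z)‖ < 1` on the disk, and the Schwarz lemma applied twice
(peeling off one factor `z` each time) gives `‖ω'‖ ≤ 1`. Since `ω(0) = f'(0) - 1 = 0`,
the mean value inequality then gives `‖ω(z)‖ ≤ ‖z‖`.
-/

open Metric Set
open scoped Topology

section Schwarz

variable {E : Type*} [NormedAddCommGroup E] [NormedSpace ℂ E]

theorem dslope_sub_smul_of_differentiableAt {h : ℂ → E} {c : ℂ} (hh : DifferentiableAt ℂ h c) :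
    dslope (fun z => (z - c) • h z) c = h := by
  ext z
  rcases eq_or_ne z c with rfl | hne
  · have hd : HasDerivAt (fun w => (w - z) • h w) ((z - z) • deriv h z + (1 : ℂ) • h z) z :=
      ((hasDerivAt_id z).sub_const z).smul hh.hasDerivAt
    simp [dslope_same, hd.deriv]
  · exact dslope_sub_smul_of_ne h hne

theorem norm_le_div_sq_of_norm_sub_sq_smul_le {h : ℂ → E} {c z : ℂ} {R M : ℝ}
    (hd : DifferentiableOn ℂ h (ball c R)) (hM : ∀ w ∈ ball c R, ‖(w - c) ^ 2 • h w‖ ≤ M)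
    (hz : z ∈ ball c R) : ‖h z‖ ≤ M / R ^ 2 := by
  have hc : ball c R ∈ 𝓝 c := isOpen_ball.mem_nhds (mem_ball_self (pos_of_mem_ball hz))
  set k : ℂ → E := fun w => (w - c) • h w
  have hk : DifferentiableOn ℂ k (ball c R) := (differentiableOn_id.sub_const c).smul hd
  have hk_dslope : dslope k c = h := dslope_sub_smul_of_differentiableAt (hd.differentiableAt hc)
  have hkk_dslope : dslope (fun w => (w - c) • k w) c = k :=
    dslope_sub_smul_of_differentiableAt (hk.differentiableAt hc)
  have hk_le : ∀ w ∈ ball c R, ‖k w‖ ≤ M / R := by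
    intro w hw
    rw [← hkk_dslope]
    refine Complex.norm_dslope_le_div_of_mapsTo_ball
      ((differentiableOn_id.sub_const c).smul hk) (fun v hv => ?_) hw
    simpa [k, smul_smul, ← sq] using hM v hv
  calc ‖h z‖ = ‖dslope k c z‖ := by rw [hk_dslope]
    _ ≤ M / R / R :=
      Complex.norm_dslope_le_div_of_mapsTo_ball hk (fun w hw => by simpa [k] using hk_le w hw) hz
    _ = M / R ^ 2 := by rw [div_div, sq]

end Schwarz

theorem mul_deriv_sub_eq_sq_mul_deriv {ω : ℂ → ℂ} {z : ℂ} (a : ℂ) (hω : DifferentiableAt ℂ ω z) :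
    z * deriv (fun w => w + a * w * ω w) z - (z + a * z * ω z) = a * z ^ 2 * deriv ω z := by
  have hd : HasDerivAt (fun w => w + a * w * ω w) (1 + (a * 1 * ω z + a * z * deriv ω z)) z :=
    (hasDerivAt_id z).add (((hasDerivAt_id z).const_mul a).mul hω.hasDerivAt)
  rw [hd.deriv]
  ring

/-- Peng–Zhong representation: every f ∈ Ω can be written as f(z) = z + (1/2)zω(z)
with ω analytic, ω(0) = 0, |ω(z)| ≤ |z| and |ω'(z)| ≤ 1 on the unit disk. -/
theorem omega_representation (f : ℂ → ℂ)
    (hf : DifferentiableOn ℂ f (ball (0:ℂ) 1))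
    (hf0 : f 0 = 0) (hf1 : deriv f 0 = 1)
    (hΩ : ∀ z ∈ ball (0:ℂ) 1, ‖z * deriv f z - f z‖ < 1 / 2) :
    ∃ ω : ℂ → ℂ, DifferentiableOn ℂ ω (ball (0:ℂ) 1) ∧ ω 0 = 0 ∧
      (∀ z ∈ ball (0:ℂ) 1, ‖ω z‖ ≤ ‖z‖) ∧
      (∀ z ∈ ball (0:ℂ) 1, ‖deriv ω z‖ ≤ 1) ∧
      ∀ z ∈ ball (0:ℂ) 1, f z = z + (1 / 2 : ℂ) * z * ω z := by
  have h0 : ball (0:ℂ) 1 ∈ 𝓝 0 := isOpen_ball.mem_nhds (mem_ball_self one_pos)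
  set ω : ℂ → ℂ := fun z => 2 * dslope (fun w => f w - w) 0 z
  have hf_eq : f = fun z => z + (1 / 2 : ℂ) * z * ω z := by
    ext z
    have := sub_smul_dslope (fun w => f w - w) 0 z
    simp only [smul_eq_mul, sub_zero, hf0] at this
    simp only [ω]
    linear_combination -this
  have hω : DifferentiableOn ℂ ω (ball 0 1) :=
    ((Complex.differentiableOn_dslope h0).2 (hf.sub differentiableOn_id)).const_mul 2
  have hω0 : ω 0 = 0 := by
    have hd : HasDerivAt (fun w => f w - w) (deriv f 0 - 1) 0 :=
      (hf.differentiableAt h0).hasDerivAt.sub (hasDerivAt_id' 0)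
    simp [ω, dslope_same, hd.deriv, hf1]
  have hω_sq : ∀ z ∈ ball (0:ℂ) 1, z * deriv f z - f z = 1 / 2 * z ^ 2 * deriv ω z := by
    intro z hz
    rw [hf_eq]
    exact mul_deriv_sub_eq_sq_mul_deriv _ (hω.differentiableAt (isOpen_ball.mem_nhds hz))
  have hω' : ∀ z ∈ ball (0:ℂ) 1, ‖deriv ω z‖ ≤ 1 := fun z hz => by
    refine (norm_le_div_sq_of_norm_sub_sq_smul_le (M := 1) (hω.deriv isOpen_ball)
      (fun w hw => ?_) hz).trans_eq (by norm_num)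
    have hw' := hΩ w hw
    rw [hω_sq w hw, norm_mul, norm_mul] at hw'
    rw [sub_zero, smul_eq_mul, norm_mul, norm_pow]
    norm_num at hw'
    linarith
  refine ⟨ω, hω, hω0, fun z hz => ?_, hω', fun z _ => congrFun hf_eq z⟩
  simpa [hω0] using (convex_ball (0:ℂ) 1).norm_image_sub_le_of_norm_deriv_le
    (fun w hw => hω.differentiableAt (isOpen_ball.mem_nhds hw)) hω' hz (mem_ball_self one_pos)
end
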